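/- arXiv:1405.0191 — 6 statements merged into one kernel-verified Lean document; each statement's English description precedes it below -/
import Mathlib

section
/- Let κ be a cardinal of countable cofinality with ω₁ < κ < 𝔠. Then no subset W of 2^ω has the (κ,2)-Grinzing property; i.e., for every W ⊆ 2^ω with |W| ≥ κ there exists Y ⊆ W with |Y| ≥ κ such that one cannot find Y₀, Y₁ ⊆ Y with |Y₀|, |Y₁| ≥ κ and disjoint closures in 2^ω. -/
open Cardinal Set Filter Topology

/-- Cylinder: agree with `x` on coordinates `< n`. -/
def Cyl (n : ℕ) (x : ℕ → Bool) : Set (ℕ → Bool) := {z | ∀ i < n, z i = x i}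

lemma cyl_isOpen (n : ℕ) (x : ℕ → Bool) : IsOpen (Cyl n x) := by
  have : Cyl n x = Set.pi {i | i < n} (fun i => {x i}) := by
    ext z; simp [Cyl, Set.mem_pi]
  rw [this]
  exact isOpen_set_pi (Set.finite_Iio n) (fun i _ => isOpen_discrete _)

lemma mem_cyl_self (n : ℕ) (x : ℕ → Bool) : x ∈ Cyl n x := fun _ _ => rfl

/-- A finite union of sets of cardinality `< κ` has cardinality `< κ`. -/
lemma mk_finset_biUnion_lt {α β : Type} {κ : Cardinal} (hκ : Cardinal.aleph0 ≤ κ)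
    (t : Finset β) (f : β → Set α) (h : ∀ b ∈ t, Cardinal.mk (f b) < κ) :
    Cardinal.mk ↥(⋃ b ∈ t, f b) < κ := by
  classical
  induction t using Finset.induction with
  | empty => simpa using lt_of_lt_of_le Cardinal.aleph0_pos hκ
  | @insert a s ha ih =>
      rw [Finset.set_biUnion_insert]
      refine lt_of_le_of_lt (Cardinal.mk_union_le _ _) ?_
      exact Cardinal.add_lt_of_lt hκ (h a (Finset.mem_insert_self a s))
        (ih fun b hb => h b (Finset.mem_insert_of_mem hb))

/-- There is a point all of whose cylinders meet `W` in a set of size `≥ κ`. -/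
lemma exists_big_point {κ : Cardinal} (hκ : Cardinal.aleph0 ≤ κ)
    (W : Set (ℕ → Bool)) (hW : κ ≤ Cardinal.mk ↥W) :
    ∃ x : ℕ → Bool, ∀ n, κ ≤ Cardinal.mk ↥(W ∩ Cyl n x) := by
  by_contra h
  push_neg at h
  choose n hn using h
  obtain ⟨t, ht⟩ := isCompact_univ.elim_finite_subcover (fun x => Cyl (n x) x)
    (fun x => cyl_isOpen _ _) (fun x _ => Set.mem_iUnion.2 ⟨x, mem_cyl_self _ _⟩)
  have hsub : W ⊆ ⋃ x ∈ t, (W ∩ Cyl (n x) x) := by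
    intro w hw
    obtain ⟨x, hx, hw'⟩ := Set.mem_iUnion₂.1 (ht (Set.mem_univ w))
    exact Set.mem_iUnion₂.2 ⟨x, hx, hw, hw'⟩
  have : Cardinal.mk ↥W < κ :=
    lt_of_le_of_lt (Cardinal.mk_le_mk_of_subset hsub)
      (mk_finset_biUnion_lt hκ t _ (fun x _ => hn x))
  exact absurd hW this.not_ge

/-- From countable cofinality, get a cofinal sequence of infinite cardinals below κ. -/
lemma exists_cofinal_seq {κ : Cardinal.{0}} (hcof : κ.ord.cof = Cardinal.aleph0)
    (hκ : Cardinal.aleph0 < κ) :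
    ∃ c : ℕ → Cardinal.{0}, (∀ n, Cardinal.aleph0 ≤ c n) ∧ (∀ n, c n < κ) ∧ κ ≤ ⨆ n, c n := by
  obtain ⟨ι, f, hlsub, hι⟩ := Ordinal.exists_lsub_cof κ.ord
  rw [hcof, ← Cardinal.mk_nat] at hι
  obtain ⟨e⟩ := Cardinal.eq.1 hι
  set g : ℕ → Ordinal := fun n => f (e.symm n) with hg
  set c : ℕ → Cardinal := fun n => Cardinal.aleph0 ⊔ (g n).card with hc
  have hclt : ∀ n, c n < κ := by
    intro n
    have : g n < κ.ord := hlsub ▸ Ordinal.lt_lsub f (e.symm n)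
    exact max_lt hκ (Cardinal.lt_ord.1 this)
  refine ⟨c, fun n => le_max_left _ _, hclt, ?_⟩
  by_contra hs
  push_neg at hs
  set s := ⨆ n, c n with hsdef
  have hs0 : Cardinal.aleph0 ≤ s :=
    le_trans (le_max_left _ _) (le_ciSup (Cardinal.bddAbove_range _) 0)
  have hκle : κ ≤ Order.succ s := by
    rw [← Cardinal.ord_le_ord, ← hlsub]
    refine Ordinal.lsub_le fun i => ?_
    have : (f i).card ≤ s := by
      have h1 : (f i).card ≤ c (e i) := by
        simp only [hc, hg, Equiv.symm_apply_apply]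
        exact le_max_right _ _
      exact h1.trans (le_ciSup (Cardinal.bddAbove_range _) (e i))
    exact Cardinal.lt_ord.2 (this.trans_lt (Order.lt_succ s))
  have hκeq : κ = Order.succ s := le_antisymm hκle (Order.succ_le_of_lt hs)
  have hreg := Cardinal.isRegular_succ hs0
  have : Order.succ s = Cardinal.aleph0 := by
    rw [← hreg.cof_eq, ← hκeq, hcof]
  exact absurd (hκeq ▸ this ▸ hκ) (lt_irrefl _)

theorem no_subset_has_kappa_two_grinzing (κ : Cardinal.{0})
    (hcof : κ.ord.cof = Cardinal.aleph0)
    (h1 : Cardinal.aleph 1 < κ) (h2 : κ < Cardinal.continuum) :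
    ∀ W : Set (ℕ → Bool), κ ≤ Cardinal.mk ↥W →
      ∃ Y ⊆ W, κ ≤ Cardinal.mk ↥Y ∧
        ¬ ∃ Y₀ Y₁ : Set (ℕ → Bool), Y₀ ⊆ Y ∧ Y₁ ⊆ Y ∧
          κ ≤ Cardinal.mk ↥Y₀ ∧ κ ≤ Cardinal.mk ↥Y₁ ∧
          closure Y₀ ∩ closure Y₁ = ∅ := by
  intro W hW
  have hℵ₀ : Cardinal.aleph0 < κ := lt_trans Cardinal.aleph0_lt_aleph_one h1
  obtain ⟨c, hcinf, hclt, hcsup⟩ := exists_cofinal_seq hcof hℵ₀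
  obtain ⟨x, hx⟩ := exists_big_point hℵ₀.le W hW
  have hsel : ∀ n, ∃ p : Set (ℕ → Bool), p ⊆ W ∩ Cyl n x ∧ Cardinal.mk ↥p = c n :=
    fun n => Cardinal.le_mk_iff_exists_subset.1 ((hclt n).le.trans (hx n))
  choose Z hZsub hZcard using hsel
  set Y : Set (ℕ → Bool) := ⋃ n, Z n with hY
  have hYW : Y ⊆ W := Set.iUnion_subset fun n => (hZsub n).trans Set.inter_subset_left
  have hYbig : κ ≤ Cardinal.mk ↥Y := by
    refine hcsup.trans (ciSup_le fun n => ?_)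
    rw [← hZcard n]
    exact Cardinal.mk_le_mk_of_subset (Set.subset_iUnion Z n)
  refine ⟨Y, hYW, hYbig, ?_⟩
  rintro ⟨Y₀, Y₁, h₀, h₁, hc₀, hc₁, hdisj⟩
  have key : ∀ Y' ⊆ Y, κ ≤ Cardinal.mk ↥Y' → x ∈ closure Y' := by
    intro Y' hY' hbig
    have hstep : ∀ m : ℕ, ∃ z ∈ Y', ∀ i < m, z i = x i := by
      intro m
      have hB : Cardinal.mk ↥(⋃ i ∈ Finset.range m, Z i) < κ :=
        mk_finset_biUnion_lt hℵ₀.le _ _ (fun i _ => (hZcard i) ▸ hclt i)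
      have hns : ¬ Y' ⊆ ⋃ i ∈ Finset.range m, Z i := fun hcon =>
        absurd (hbig.trans (Cardinal.mk_le_mk_of_subset hcon)) hB.not_ge
      obtain ⟨z, hzY', hzB⟩ := Set.not_subset.1 hns
      obtain ⟨n, hzn⟩ := Set.mem_iUnion.1 (hY' hzY')
      have hmn : m ≤ n := by
        by_contra hlt
        exact hzB (Set.mem_biUnion (Finset.mem_range.2 (not_le.1 hlt)) hzn)
      exact ⟨z, hzY', fun i hi => ((hZsub n) hzn).2 i (lt_of_lt_of_le hi hmn)⟩
    choose z hzmem hzagree using hstep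
    have htend : Filter.Tendsto z Filter.atTop (nhds x) := by
      rw [tendsto_pi_nhds]
      intro i
      refine tendsto_const_nhds.congr' ?_
      filter_upwards [Filter.eventually_ge_atTop (i + 1)] with m hm
      exact (hzagree m i (lt_of_lt_of_le (Nat.lt_succ_self i) hm)).symm
    exact mem_closure_of_tendsto htend (Filter.Eventually.of_forall hzmem)
  have hx0 := key Y₀ h₀ hc₀
  have hx1 := key Y₁ h₁ hc₁
  exact absurd (hdisj ▸ (⟨hx0, hx1⟩ : x ∈ closure Y₀ ∩ closure Y₁)) (Set.notMem_empty x)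
end

section
/- Assume 𝔟 > ω₁. Then every separable metrizable space X with the perfect set property for closed subsets also has the perfect set property for analytic subsets. -/
/-- `f <* g`: eventual domination. -/
def EvDomLT (f g : ℕ → ℕ) : Prop := ∃ m : ℕ, ∀ n ≥ m, f n < g n

/-- A family of functions in Baire space is unbounded with respect to `<*`. -/
def UnboundedFam (B : Set (ℕ → ℕ)) : Prop := ¬ ∃ g : ℕ → ℕ, ∀ f ∈ B, EvDomLT f g

/-- The bounding number `𝔟`. -/
noncomputable def bCard : Cardinal.{0} :=
  sInf { c | ∃ B : Set (ℕ → ℕ), UnboundedFam B ∧ Cardinal.mk ↥B = c }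

/-- `A` contains a homeomorphic copy of the Cantor set `2^ω`. -/
def ContainsCantorCopy {T : Type} [TopologicalSpace T] (A : Set T) : Prop :=
  ∃ f : (ℕ → Bool) → T, Continuous f ∧ Function.Injective f ∧ Set.range f ⊆ A

theorem psp_closed_implies_psp_analytic_of_b_gt_aleph1
    (hb : Cardinal.aleph 1 < bCard)
    (T : Type) [TopologicalSpace T] [PolishSpace T] (X : Set T)
    (hpsp : ∀ C : Set T, IsClosed C → ¬ (C ∩ X).Countable → ContainsCantorCopy (C ∩ X)) :
    ∀ A : Set T, MeasureTheory.AnalyticSet A → ¬ (A ∩ X).Countable →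
      ContainsCantorCopy (A ∩ X) := by
  intro A hA hunc
  by_contra hno
  -- A is nonempty (it is uncountable), so it is a continuous image of Baire space
  rw [MeasureTheory.AnalyticSet] at hA
  rcases hA with hA | ⟨f, hf, hfA⟩
  · exact hunc (by simp [hA])
  -- Every compact subset of Baire space contributes only countably many points
  have hfK : ∀ K : Set (ℕ → ℕ), IsCompact K → (f '' K ∩ X).Countable := by
    intro K hK
    by_contra hc
    obtain ⟨e, he1, he2, he3⟩ := hpsp _ ((hK.image hf).isClosed) hc
    refine hno ⟨e, he1, he2, he3.trans (Set.inter_subset_inter_left X ?_)⟩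
    exact hfA ▸ Set.image_subset_range f K
  -- Pick a subset P of A ∩ X of cardinality ℵ₁
  have h1 : Cardinal.aleph 1 ≤ Cardinal.mk ↥(A ∩ X) := by
    have := (Cardinal.countable_iff_lt_aleph_one (A ∩ X)).not.mp hunc
    exact not_lt.mp (by simpa using this)
  obtain ⟨P, hP⟩ := Cardinal.le_mk_iff_exists_set.mp h1
  -- Choose preimages under f of the points of P
  have hpre : ∀ p : ↥P, ∃ x : ℕ → ℕ, f x = ((p : ↥(A ∩ X)) : T) := by
    intro p
    show ((p : ↥(A ∩ X)) : T) ∈ Set.range f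
    rw [hfA]
    exact (p : ↥(A ∩ X)).2.1
  choose σ hσ using hpre
  have hσinj : Function.Injective σ := by
    intro p q hpq
    have : ((p : ↥(A ∩ X)) : T) = ((q : ↥(A ∩ X)) : T) := by
      rw [← hσ p, ← hσ q, hpq]
    exact Subtype.ext (Subtype.ext this)
  -- The family of preimages has size ℵ₁ < 𝔟, hence is bounded
  have hScard : Cardinal.mk ↥(Set.range σ) = Cardinal.aleph 1 := by
    rw [Cardinal.mk_range_eq σ hσinj, hP]
  have hbdd : ¬ UnboundedFam (Set.range σ) := by
    intro hU
    have : bCard ≤ Cardinal.aleph 1 := csInf_le' ⟨Set.range σ, hU, hScard⟩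
    exact absurd (lt_of_le_of_lt this hb) (lt_irrefl _)
  rw [UnboundedFam, not_not] at hbdd
  obtain ⟨g, hg⟩ := hbdd
  -- The bounded family lies in a countable union of compact sets
  set K : ℕ → Set (ℕ → ℕ) := fun k => Set.pi Set.univ fun n => Set.Iic (max (g n) k) with hKdef
  have hKcomp : ∀ k, IsCompact (K k) :=
    fun _ => isCompact_univ_pi fun _ => (Set.finite_Iic _).isCompact
  have hcover : ∀ p : ↥P, ∃ k, σ p ∈ K k := by
    intro p
    obtain ⟨m, hm⟩ := hg (σ p) ⟨p, rfl⟩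
    refine ⟨(Finset.range m).sup (σ p), ?_⟩
    rw [hKdef]
    intro n _
    simp only [Set.mem_Iic]
    rcases lt_or_ge n m with h | h
    · exact le_max_of_le_right (Finset.le_sup (Finset.mem_range.mpr h))
    · exact le_max_of_le_left (le_of_lt (hm n h))
  -- Hence P is contained in a countable set, contradicting |P| = ℵ₁
  have hPsub : (fun p : ↥P => ((p : ↥(A ∩ X)) : T)) '' Set.univ ⊆ ⋃ k, (f '' K k ∩ X) := by
    rintro t ⟨p, -, rfl⟩
    obtain ⟨k, hk⟩ := hcover p
    refine Set.mem_iUnion.mpr ⟨k, ⟨⟨σ p, hk, hσ p⟩, (p : ↥(A ∩ X)).2.2⟩⟩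
  have hUc : (⋃ k, (f '' K k ∩ X)).Countable :=
    Set.countable_iUnion fun k => hfK (K k) (hKcomp k)
  have hPc : ((fun p : ↥P => ((p : ↥(A ∩ X)) : T)) '' Set.univ).Countable :=
    hUc.mono hPsub
  have hinj : Function.Injective (fun p : ↥P => ((p : ↥(A ∩ X)) : T)) := by
    intro p q h
    exact Subtype.ext (Subtype.ext h)
  have : Cardinal.mk ↥((fun p : ↥P => ((p : ↥(A ∩ X)) : T)) '' Set.univ)
      = Cardinal.aleph 1 := by
    rw [Cardinal.mk_image_eq hinj, Cardinal.mk_univ, hP]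
  have hlt := (Cardinal.countable_iff_lt_aleph_one _).mp hPc
  rw [this] at hlt
  exact lt_irrefl _ hlt
end

section
/- Every filter F on ω extending the Fréchet filter, identified with a subspace of 2^ω via characteristic functions, has the perfect set property for open subsets: every uncountable open subset of F contains a copy of 2^ω. -/
/-- The characteristic function identification of `P(ω)` with `2^ω`. -/
noncomputable def chi (s : Set ℕ) : ℕ → Bool := fun n =>
  @decide (n ∈ s) (Classical.propDecidable _)

/-- `F` is a filter on `ω` extending the Fréchet (cofinite) filter, viewed as a
family of subsets of `ω`. -/
def IsFilterOnOmega (F : Set (Set ℕ)) : Prop :=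
  (∀ s : Set ℕ, sᶜ.Finite → s ∈ F) ∧
  (∀ s ∈ F, ∀ t : Set ℕ, s ⊆ t → t ∈ F) ∧
  (∀ s ∈ F, ∀ t ∈ F, s ∩ t ∈ F) ∧
  (∅ : Set ℕ) ∉ F

lemma chi_eq_true_iff (s : Set ℕ) (n : ℕ) : chi s n = true ↔ n ∈ s := by
  simp [chi]

lemma chi_eq_false_iff (s : Set ℕ) (n : ℕ) : chi s n = false ↔ n ∉ s := by
  simp [chi]

lemma chi_congr {A B : Set ℕ} (m : ℕ) (h : m ∈ A ↔ m ∈ B) : chi A m = chi B m := by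
  cases hb : chi B m with
  | true => exact (chi_eq_true_iff _ _).mpr (h.mpr ((chi_eq_true_iff _ _).mp hb))
  | false => exact (chi_eq_false_iff _ _).mpr (fun hA => (chi_eq_false_iff _ _).mp hb (h.mp hA))

lemma cofin_countable : {s : Set ℕ | sᶜ.Finite}.Countable := by
  have h : {s : Set ℕ | sᶜ.Finite} ⊆ compl '' {s : Set ℕ | s.Finite} := by
    intro s hs
    exact ⟨sᶜ, hs, compl_compl s⟩
  exact (Set.Countable.setOf_finite.image _).mono h

theorem filter_psp_open (F : Set (Set ℕ)) (hF : IsFilterOnOmega F) :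
    ∀ U : Set (ℕ → Bool), IsOpen U → ¬ (U ∩ (chi '' F)).Countable →
      ContainsCantorCopy (U ∩ (chi '' F)) := by
  intro U hU hc
  obtain ⟨hcof, hup, hint, hne⟩ := hF
  -- find a point of U ∩ chi '' F coming from a coinfinite set
  have : ¬ (U ∩ chi '' F ⊆ chi '' {s : Set ℕ | sᶜ.Finite}) := by
    intro hsub
    exact hc (((cofin_countable).image chi).mono hsub)
  obtain ⟨x, hx, hxnot⟩ := Set.not_subset.mp this
  obtain ⟨s, hsF, hxs⟩ := hx.2
  have hsinf : sᶜ.Infinite := by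
    intro hfin
    exact hxnot ⟨s, hfin, hxs⟩
  have hxU : x ∈ U := hx.1
  -- basic open neighborhood
  obtain ⟨I, u, hIu, hpi⟩ := isOpen_pi_iff.mp hU x hxU
  -- infinite set of free coordinates
  have hD : (sᶜ \ (I : Set ℕ)).Infinite := hsinf.diff I.finite_toSet
  set e : ℕ ↪ ↑(sᶜ \ (I : Set ℕ)) := hD.natEmbedding
  -- the embedding
  set t : (ℕ → Bool) → Set ℕ := fun b => s ∪ {m | ∃ k, (e k : ℕ) = m ∧ b k = true}
    with ht
  have hts : ∀ b, s ⊆ t b := fun b => Set.subset_union_left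
  have htI : ∀ b, ∀ i ∈ I, (i ∈ t b ↔ i ∈ s) := by
    intro b i hi
    constructor
    · rintro (h | ⟨k, hk, -⟩)
      · exact h
      · exact absurd (hk ▸ (e k).2.2) (by simp [hi])
    · exact fun h => Or.inl h
  have hte : ∀ b k, ((e k : ℕ) ∈ t b ↔ b k = true) := by
    intro b k
    constructor
    · rintro (h | ⟨k', hk', hb⟩)
      · exact absurd h (e k).2.1
      · have : k' = k := e.injective (Subtype.ext hk')
        exact this ▸ hb
    · exact fun h => Or.inr ⟨k, rfl, h⟩
  have hval : ∀ b k, chi (t b) (e k : ℕ) = b k := by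
    intro b k
    cases hb : b k with
    | true => exact (chi_eq_true_iff _ _).mpr ((hte b k).mpr hb)
    | false =>
      refine (chi_eq_false_iff _ _).mpr (fun hmem => ?_)
      rw [(hte b k).mp hmem] at hb
      exact Bool.noConfusion hb
  refine ⟨fun b => chi (t b), ?_, ?_, ?_⟩
  · -- continuity
    apply continuous_pi
    intro m
    by_cases hm : m ∈ s
    · have : (fun b => chi (t b) m) = fun _ => true := by
        funext b
        exact (chi_eq_true_iff _ _).mpr (hts b hm)
      rw [this]; exact continuous_const
    · by_cases hk : ∃ k, (e k : ℕ) = m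
      · obtain ⟨k, hk⟩ := hk
        have : (fun b => chi (t b) m) = fun b => b k := by
          funext b; rw [← hk]; exact hval b k
        rw [this]; exact continuous_apply k
      · have : (fun b => chi (t b) m) = fun _ => false := by
          funext b
          refine (chi_eq_false_iff _ _).mpr ?_
          rintro (h | ⟨k, hkm, -⟩)
          · exact hm h
          · exact hk ⟨k, hkm⟩
        rw [this]; exact continuous_const
  · -- injectivity
    intro b b' h
    have h' : chi (t b) = chi (t b') := h
    funext k
    rw [← hval b k, ← hval b' k, h']
  · -- range in U ∩ chi '' F
    rintro y ⟨b, rfl⟩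
    constructor
    · apply hpi
      intro i hi
      have hxi : x i ∈ u i := (hIu i hi).2
      show chi (t b) i ∈ u i
      have : chi (t b) i = x i := by
        rw [← hxs]
        exact chi_congr i (htI b i hi)
      rw [this]; exact hxi
    · exact ⟨t b, hup s hsF (t b) (hts b), rfl⟩
end

section
/- Assume CH (or merely 𝔟 = ω₁ together with the existence of a <*-increasing unbounded ω₁-sequence of increasing functions). Then 2^ω does not have the Grinzing property: there is an uncountable Y ⊆ 2^ω such that there do not exist ω₁-many uncountable subsets of Y with pairwise disjoint closures in 2^ω. -/
/-!
Under CH, index `ℕ → ℕ` as `(g_i)` by the countable ordinals and let `f_i` be strictly increasing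
and eventually above every `g_j` with `j < i`. The family `F = {f_i}` is uncountable, and each
pointwise bounded subset of it is countable: bounded by some `g_γ`, it contains only `f_i` with
`i ≤ γ`. Encode a strictly increasing `e` by the indicator of its range. On an uncountable `Z ⊆ F`
some coordinate is unbounded; if `k` is the least one, the encodings of members `e` of `Z` with
`e k → ∞` cluster at the indicator of a finite set. So the closure of every uncountable subset
of the encoded family meets the countable set of finitely supported sequences, and only
countably many such closures can be pairwise disjoint.
-/

universe u

open Cardinal Set Filter Function

lemma exists_strictMono_eventually_gt_of_countable {s : Set (ℕ → ℕ)} (hs : s.Countable) :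
    ∃ h : ℕ → ℕ, StrictMono h ∧ ∀ f ∈ s, ∀ᶠ n in atTop, f n < h n := by
  obtain ⟨u, hu⟩ := Set.countable_iff_exists_subset_range.mp hs
  set v : ℕ → ℕ := fun m => ∑ i ∈ Finset.range (m + 1), u i m + 1
  refine ⟨fun n => ∑ m ∈ Finset.range (n + 1), v m, ?_, ?_⟩
  · refine strictMono_nat_of_lt_succ fun n => ?_
    rw [Finset.sum_range_succ _ (n + 1)]
    exact Nat.lt_add_of_pos_right (Nat.succ_pos _)
  · intro f hf
    obtain ⟨i, rfl⟩ := hu hf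
    filter_upwards [eventually_ge_atTop i] with n hn
    calc u i n ≤ ∑ j ∈ Finset.range (n + 1), u j n :=
          Finset.single_le_sum (f := fun j => u j n) (fun _ _ => Nat.zero_le _)
            (Finset.mem_range.2 (Nat.lt_succ_of_le hn))
      _ < v n := Nat.lt_succ_self _
      _ ≤ ∑ m ∈ Finset.range (n + 1), v m :=
          Finset.single_le_sum (fun _ _ => Nat.zero_le _) (Finset.mem_range.2 n.lt_succ_self)

section Domination

variable {ι : Type*} [LinearOrder ι] {g f : ι → ℕ → ℕ}

lemma countable_of_bddAbove_of_subset_range (hι : ∀ i : ι, (Iio i).Countable)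
    (hg : Surjective g) (hf : ∀ i j, j < i → ∀ᶠ n in atTop, g j n < f i n)
    {Z : Set (ℕ → ℕ)} (hZf : Z ⊆ range f) (hZ : BddAbove Z) : Z.Countable := by
  obtain ⟨b, hb⟩ := hZ
  obtain ⟨γ, rfl⟩ := hg b
  refine (((hι γ).insert γ).image f).mono fun z hz => ?_
  obtain ⟨i, rfl⟩ := hZf hz
  refine ⟨i, ?_, rfl⟩
  rw [Iio_insert, mem_Iic]
  by_contra! hγi
  obtain ⟨n, hn⟩ := (hf i γ hγi).exists
  exact (hb hz n).not_gt hn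

lemma not_countable_range [Uncountable ι] (hι : ∀ i : ι, (Iio i).Countable)
    (hg : Surjective g) (hf : ∀ i j, j < i → ∀ᶠ n in atTop, g j n < f i n) :
    ¬ (range f).Countable := by
  intro hfc
  obtain ⟨h, -, hh⟩ := exists_strictMono_eventually_gt_of_countable hfc
  obtain ⟨γ, rfl⟩ := hg h
  obtain ⟨i, hi⟩ : ∃ i, γ < i := by
    by_contra! hγ
    refine not_countable (α := ι) (countable_univ_iff.1 (((hι γ).insert γ).mono ?_))
    rw [Iio_insert]
    exact fun i _ => hγ i
  obtain ⟨n, hgf, hfg⟩ := ((hf i γ hi).and (hh _ (mem_range_self i))).exists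
  exact lt_asymm hgf hfg

lemma exists_uncountable_strictMono_forall_bddAbove_countable [Uncountable ι]
    (hι : ∀ i : ι, (Iio i).Countable) (hg : Surjective g) :
    ∃ F : Set (ℕ → ℕ), ¬ F.Countable ∧ (∀ e ∈ F, StrictMono e) ∧
      ∀ Z ⊆ F, BddAbove Z → Z.Countable := by
  choose f hf_mono hf_gt using fun i => exists_strictMono_eventually_gt_of_countable
    ((hι i).image g)
  have hf : ∀ i j, j < i → ∀ᶠ n in atTop, g j n < f i n :=
    fun i j hj => hf_gt i _ (mem_image_of_mem g hj)
  exact ⟨range f, not_countable_range hι hg hf, forall_mem_range.2 hf_mono,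
    fun Z hZ => countable_of_bddAbove_of_subset_range hι hg hf hZ⟩

end Domination

lemma countable_Iio_toType_ord_aleph_one (i : (ℵ₁ : Cardinal.{0}).ord.ToType) :
    (Iio i).Countable := by
  have h := mk_Iio_lt i (by rw [mk_ord_toType, Ordinal.type_toType])
  rw [mk_ord_toType] at h
  exact le_aleph0_iff_set_countable.1 (lt_aleph_one_iff.1 h)

instance uncountable_toType_ord_aleph_one : Uncountable (ℵ₁ : Cardinal.{u}).ord.ToType := by
  rw [← aleph0_lt_mk_iff, mk_ord_toType]
  exact aleph0_lt_aleph_one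

instance uncountable_Iio_ord_aleph_one : Uncountable (Iio (ℵ₁ : Cardinal.{u}).ord) := by
  rw [← aleph0_lt_mk_iff, mk_Iio_ordinal, card_ord, lift_aleph, Ordinal.lift_one]
  exact aleph0_lt_aleph_one

lemma exists_surjective_toType_ord_aleph_one (hCH : Cardinal.continuum.{u} = ℵ₁) :
    ∃ g : (ℵ₁ : Cardinal.{0}).ord.ToType → ℕ → ℕ, Surjective g := by
  have hCH0 : Cardinal.continuum.{0} = ℵ₁ := by
    rw [← lift_inj.{0, u}]
    simpa using hCH
  obtain ⟨e⟩ : Nonempty ((ℵ₁ : Cardinal.{0}).ord.ToType ≃ (ℕ → ℕ)) := by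
    rw [← Cardinal.eq, mk_ord_toType, ← hCH0]
    simp
  exact ⟨e, e.surjective⟩

open Classical in
noncomputable def rangeIndicator (e : ℕ → ℕ) : ℕ → Bool := fun n => decide (n ∈ range e)

lemma rangeIndicator_eq_false {e : ℕ → ℕ} {n : ℕ} :
    rangeIndicator e n = false ↔ n ∉ range e := by
  simp [rangeIndicator]

lemma injOn_rangeIndicator : InjOn rangeIndicator {e | StrictMono e} := fun e he e' he' h =>
  (StrictMono.range_inj he he').1 <| Set.ext fun n => by simpa [rangeIndicator] using congrFun h n

lemma exists_eventually_false_mem_closure_image_rangeIndicator {F : Set (ℕ → ℕ)}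
    (hF : ∀ e ∈ F, Monotone e) (hunb : ¬ BddAbove F) :
    ∃ d ∈ closure (rangeIndicator '' F), ∀ᶠ n in atTop, d n = false := by
  classical
  have hex : ∃ k, ¬ BddAbove (eval k '' F) := by simpa [bddAbove_pi] using hunb
  obtain ⟨k, hk, hbdd⟩ : ∃ k, ¬ BddAbove (eval k '' F) ∧ ∀ j < k, BddAbove (eval j '' F) :=
    ⟨Nat.find hex, Nat.find_spec hex, fun j hj => not_not.1 (Nat.find_min hex hj)⟩
  obtain ⟨B, hB⟩ : BddAbove (⋃ j ∈ Iio k, eval j '' F) :=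
    (finite_Iio k).bddAbove_biUnion.2 hbdd
  replace hk : ∀ m, ∃ e ∈ F, m < e k := by simpa [not_bddAbove_iff] using hk
  choose e heF hek using hk
  obtain ⟨d, hd⟩ := exists_clusterPt_of_compactSpace (map (fun m => rangeIndicator (e m)) atTop)
  have mem_closure_of_eventually {s : Set (ℕ → Bool)}
      (hs : ∀ᶠ m in atTop, rangeIndicator (e m) ∈ s) : d ∈ closure s :=
    mem_closure_iff_clusterPt.2 (hd.mono (le_principal_iff.2 hs))
  refine ⟨d, mem_closure_of_eventually (.of_forall fun m => mem_image_of_mem _ (heF m)), ?_⟩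
  filter_upwards [eventually_gt_atTop B] with n hn
  refine (isClosed_eq (continuous_apply n) continuous_const).closure_subset
    (mem_closure_of_eventually ?_)
  filter_upwards [eventually_ge_atTop n] with m hm
  rw [rangeIndicator_eq_false]
  rintro ⟨j, rfl⟩
  rcases lt_or_ge j k with hjk | hjk
  · exact hn.not_ge (hB (mem_biUnion hjk (mem_image_of_mem _ (heF m))))
  · exact (hek m).not_ge ((hF _ (heF m) hjk).trans hm)

lemma exists_eventually_false_mem_closure_of_subset_image {F : Set (ℕ → ℕ)}
    (hF_mono : ∀ e ∈ F, Monotone e) (hF_bdd : ∀ Z ⊆ F, BddAbove Z → Z.Countable)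
    {Y : Set (ℕ → Bool)} (hYF : Y ⊆ rangeIndicator '' F) (hY : ¬ Y.Countable) :
    ∃ d ∈ closure Y, ∀ᶠ n in atTop, d n = false := by
  set Z := F ∩ rangeIndicator ⁻¹' Y
  have hYZ : Y ⊆ rangeIndicator '' Z := by
    rintro y hy
    obtain ⟨e, he, rfl⟩ := hYF hy
    exact ⟨e, ⟨he, hy⟩, rfl⟩
  have hZ : ¬ BddAbove Z := fun hZ =>
    hY (((hF_bdd Z inter_subset_left hZ).image rangeIndicator).mono hYZ)
  obtain ⟨d, hd, hd_false⟩ :=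
    exists_eventually_false_mem_closure_image_rangeIndicator (fun e he => hF_mono e he.1) hZ
  exact ⟨d, closure_mono (image_subset_iff.2 inter_subset_right) hd, hd_false⟩

lemma countable_setOf_eventually_false :
    {d : ℕ → Bool | ∀ᶠ n in atTop, d n = false}.Countable := by
  refine (countable_range fun s : Finset ℕ => fun n => decide (n ∈ s)).mono fun d hd => ?_
  obtain ⟨N, hN⟩ := eventually_atTop.1 hd
  refine ⟨(Finset.range N).filter (d · = true), funext fun n => ?_⟩
  by_cases hn : n < N
  · simp [hn]
  · simp [hn, hN n (not_lt.1 hn)]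

lemma countable_of_pairwise_disjoint_of_inter_nonempty {ι α : Type*} {s : ι → Set α}
    {D : Set α} (hD : D.Countable) (hs : Pairwise (Disjoint on s))
    (hsD : ∀ i, (s i ∩ D).Nonempty) : Countable ι := by
  choose x hx using hsD
  have : Countable D := hD.to_subtype
  refine Injective.countable (f := fun i => (⟨x i, (hx i).2⟩ : D)) fun i j hij => ?_
  by_contra hne
  exact (hs hne).ne_of_mem (hx i).1 (hx j).1 (congrArg Subtype.val hij)

theorem ch_implies_cantor_not_grinzing
    (hCH : Cardinal.continuum = Cardinal.aleph 1) :
    ∃ Y : Set (ℕ → Bool), ¬ Y.Countable ∧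
      ¬ ∃ Yf : Set.Iio (Cardinal.aleph 1).ord → Set (ℕ → Bool),
        (∀ α, Yf α ⊆ Y ∧ ¬ (Yf α).Countable) ∧
        (∀ α β, α ≠ β → closure (Yf α) ∩ closure (Yf β) = ∅) := by
  obtain ⟨g, hg⟩ := exists_surjective_toType_ord_aleph_one hCH
  obtain ⟨F, hF_unc, hF_mono, hF_bdd⟩ :=
    exists_uncountable_strictMono_forall_bddAbove_countable
      countable_Iio_toType_ord_aleph_one hg
  refine ⟨rangeIndicator '' F, fun hY => hF_unc ((mapsTo_image _ F).countable_of_injOn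
    (injOn_rangeIndicator.mono hF_mono) hY), ?_⟩
  rintro ⟨Yf, hYf, hdisj⟩
  refine not_countable (countable_of_pairwise_disjoint_of_inter_nonempty
    countable_setOf_eventually_false (s := fun α => closure (Yf α))
    (fun α β h => disjoint_iff_inter_eq_empty.2 (hdisj α β h)) fun α => ?_)
  exact exists_eventually_false_mem_closure_of_subset_image
    (fun e he => (hF_mono e he).monotone) hF_bdd (hYf α).1 (hYf α).2
end

section
/- If there exists a Luzin set in 2^ω, then 2^ω does not have the Grinzing property: a Luzin set L witnesses that one cannot find ω₁-many uncountable subsets of L with pairwise disjoint closures in 2^ω. -/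
/-- `L` is a Luzin set in the ambient space: it is uncountable and all of its
uncountable subsets are non-meager. -/
def IsLuzin {T : Type} [TopologicalSpace T] (L : Set T) : Prop :=
  ¬ L.Countable ∧ ∀ A ⊆ L, ¬ A.Countable → ¬ IsMeagre A

/-! A family of sets with pairwise disjoint closures that are not nowhere dense yields pairwise disjoint
nonempty open sets, the interiors of the closures; in a separable space there are only countably
many of those. Every uncountable subset of a Luzin set is non-meager, so not nowhere dense, while
there are uncountably many ordinals below `ω₁`. -/

open Set Function Cardinal

theorem IsLuzin.not_isNowhereDense {T : Type} [TopologicalSpace T] {L A : Set T}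
    (hL : IsLuzin L) (hAL : A ⊆ L) (hA : ¬ A.Countable) : ¬ IsNowhereDense A :=
  fun hnd => hL.2 A hAL hA hnd.isMeagre

theorem Pairwise.countable_of_disjoint_closure {X ι : Type*} [TopologicalSpace X]
    [TopologicalSpace.SeparableSpace X] {s : ι → Set X}
    (hd : Pairwise (Disjoint on fun i => closure (s i))) (hs : ∀ i, ¬ IsNowhereDense (s i)) :
    Countable ι :=
  (hd.mono fun _ _ h => h.mono interior_subset interior_subset).countable_of_isOpen_disjoint
    (fun _ => isOpen_interior) (fun i => nonempty_iff_ne_empty.2 (hs i))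

theorem Cardinal.not_countable_Iio_ord {c : Cardinal} (hc : ℵ₀ < c) : ¬ Countable (Iio c.ord) := by
  rwa [← mk_le_aleph0_iff, mk_Iio_ordinal, card_ord, lift_le_aleph0, not_le]

theorem luzin_witnesses_failure_of_grinzing (L : Set (ℕ → Bool)) (hL : IsLuzin L) :
    ¬ ∃ Yf : Set.Iio (Cardinal.aleph 1).ord → Set (ℕ → Bool),
      (∀ α, Yf α ⊆ L ∧ ¬ (Yf α).Countable) ∧
      (∀ α β, α ≠ β → closure (Yf α) ∩ closure (Yf β) = ∅) := by
  rintro ⟨Yf, hYf, hdisj⟩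
  exact Cardinal.not_countable_Iio_ord aleph0_lt_aleph_one <| Pairwise.countable_of_disjoint_closure
      (fun α β hαβ => disjoint_iff_inter_eq_empty.2 (hdisj α β hαβ))
      (fun α => hL.not_isNowhereDense (hYf α).1 (hYf α).2)
end

section
/- Assume 𝔟 > κ for an uncountable cardinal κ of uncountable cofinality. Then every separable metrizable space with the κ-PSP for closed subsets has the κ-PSP for analytic subsets. -/
theorem kappa_psp_closed_implies_kappa_psp_analytic_of_b_gt_kappa
    (κ : Cardinal.{0}) (hκ : Cardinal.aleph0 < κ) (hcof : Cardinal.aleph0 < κ.ord.cof)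
    (hb : κ < bCard)
    (T : Type) [TopologicalSpace T] [PolishSpace T] (X : Set T)
    (hpsp : ∀ C : Set T, IsClosed C → κ ≤ Cardinal.mk ↥(C ∩ X) →
      ContainsCantorCopy (C ∩ X)) :
    ∀ A : Set T, MeasureTheory.AnalyticSet A → κ ≤ Cardinal.mk ↥(A ∩ X) →
      ContainsCantorCopy (A ∩ X) := by
  intro A hA hcard
  rw [MeasureTheory.AnalyticSet] at hA
  rcases hA with rfl | ⟨f, hf, rfl⟩
  · exfalso
    rw [Set.empty_inter] at hcard
    simp only [Cardinal.mk_emptyCollection] at hcard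
    exact absurd (hκ.trans_le hcard) (by simp)
  -- choose a subset S of size κ
  obtain ⟨S, hS, hSκ⟩ := Cardinal.le_mk_iff_exists_subset.mp hcard
  -- choose preimages
  have hpre : ∀ x : S, ∃ y : ℕ → ℕ, f y = (x : T) := fun x => (hS x.2).1
  choose G hG using hpre
  -- the family of preimages is bounded, since its cardinality is ≤ κ < 𝔟
  have hbdd : ∃ g : ℕ → ℕ, ∀ b ∈ Set.range G, EvDomLT b g := by
    by_contra h
    have : bCard ≤ Cardinal.mk ↥(Set.range G) :=
      csInf_le' ⟨Set.range G, h, rfl⟩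
    have hle : Cardinal.mk ↥(Set.range G) ≤ κ := by
      calc Cardinal.mk ↥(Set.range G) ≤ Cardinal.mk S := Cardinal.mk_range_le
        _ = κ := hSκ
    exact absurd hb (not_lt.mpr (this.trans hle))
  obtain ⟨g, hg⟩ := hbdd
  -- σ-compact pieces
  set K : ℕ × ℕ → Set (ℕ → ℕ) :=
    fun p => Set.pi Set.univ (fun i => Set.Iic (if i < p.1 then p.2 else g i)) with hK
  have hKcomp : ∀ p, IsCompact (K p) :=
    fun p => isCompact_univ_pi (fun i => (Set.finite_Iic _).isCompact)
  -- the selected points are covered by images of the pieces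
  have hcover : S ⊆ ⋃ p : ℕ × ℕ, (f '' K p ∩ X) := by
    intro x hx
    obtain ⟨m, hm⟩ := hg (G ⟨x, hx⟩) ⟨⟨x, hx⟩, rfl⟩
    refine Set.mem_iUnion.mpr ⟨(m, (Finset.range m).sup (G ⟨x, hx⟩)), ?_, (hS hx).2⟩
    refine ⟨G ⟨x, hx⟩, ?_, hG ⟨x, hx⟩⟩
    intro i _
    simp only [Set.mem_Iic]
    split_ifs with hi
    · exact Finset.le_sup (Finset.mem_range.mpr hi)
    · exact (hm i (not_lt.mp hi)).le
  -- some piece has size ≥ κ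
  have hpiece : ∃ p : ℕ × ℕ, κ ≤ Cardinal.mk ↥(f '' K p ∩ X) := by
    by_contra h
    push_neg at h
    have h1 : κ ≤ Cardinal.mk ↥(⋃ p : ℕ × ℕ, (f '' K p ∩ X)) := by
      calc κ = Cardinal.mk S := hSκ.symm
        _ ≤ _ := Cardinal.mk_le_mk_of_subset hcover
    have h2 : Cardinal.mk ↥(⋃ p : ℕ × ℕ, (f '' K p ∩ X)) ≤
        Cardinal.mk (ℕ × ℕ) * ⨆ p : ℕ × ℕ, Cardinal.mk ↥(f '' K p ∩ X) :=
      Cardinal.mk_iUnion_le _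
    have hsup : (⨆ p : ℕ × ℕ, Cardinal.mk ↥(f '' K p ∩ X)) < κ :=
      Ordinal.iSup_lt (by simpa using hcof) h
    have h3 : Cardinal.mk (ℕ × ℕ) * ⨆ p : ℕ × ℕ, Cardinal.mk ↥(f '' K p ∩ X) < κ := by
      apply Cardinal.mul_lt_of_lt hκ.le _ hsup
      simpa using hκ
    exact absurd (h1.trans h2) (not_le.mpr h3)
  obtain ⟨p, hp⟩ := hpiece
  -- apply the closed PSP to the compact image
  have hclosed : IsClosed (f '' K p) := ((hKcomp p).image hf).isClosed
  obtain ⟨e, he1, he2, he3⟩ := hpsp (f '' K p) hclosed hp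
  exact ⟨e, he1, he2, he3.trans (Set.inter_subset_inter_left X
    (Set.image_subset_range f (K p)))⟩
end
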